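/- arXiv:0707.0186 — 8 statements merged into one kernel-verified Lean document; each statement's English description precedes it below -/
import Mathlib

section
/- Let c be a Clifford multiplication on S over V = ℝⁿ, let ψ ∈ S be nonzero, let E : V → V be ℝ-linear, and suppose δ(X) = −c(E X)(ψ) for all X ∈ V. Then for all X, Y ∈ V one has T^{ψ,δ}(X,Y) = (1/2)(⟨E X, Y⟩ + ⟨E Y, X⟩); that is, the energy–momentum tensor T^{ψ,δ} equals the symmetric part of E. -/
/-- If `δ X = -c (E X) ψ` for a Clifford multiplication `c`, then the
energy-momentum tensor `T^{ψ,δ}` equals the symmetric part of `E`. -/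
theorem energy_momentum_eq_symmetric_part
    {n : ℕ} (hn : 1 ≤ n) {S : Type*} [NormedAddCommGroup S] [InnerProductSpace ℂ S]
    (c : EuclideanSpace ℝ (Fin n) →ₗ[ℝ] (S →ₗ[ℂ] S))
    (hclif : ∀ (v : EuclideanSpace ℝ (Fin n)) (ψ : S), c v (c v ψ) = -((‖v‖ ^ 2 : ℝ) • ψ))
    (hskew : ∀ (v : EuclideanSpace ℝ (Fin n)) (φ ψ : S),
      (inner ℂ (c v φ) ψ : ℂ).re = -(inner ℂ φ (c v ψ) : ℂ).re)
    (ψ : S) (hψ : ψ ≠ 0)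
    (E : EuclideanSpace ℝ (Fin n) →ₗ[ℝ] EuclideanSpace ℝ (Fin n))
    (δ : EuclideanSpace ℝ (Fin n) → S)
    (hδ : ∀ X, δ X = -(c (E X) ψ)) :
    ∀ X Y : EuclideanSpace ℝ (Fin n),
      (1 / 2 : ℝ) * (inner ℂ (c X (δ Y) + c Y (δ X)) ψ : ℂ).re / ‖ψ‖ ^ 2
        = (1 / 2 : ℝ) * ((inner ℝ (E X) Y : ℝ) + (inner ℝ (E Y) X : ℝ)) := by
  have hψ2 : (‖ψ‖ : ℝ) ^ 2 ≠ 0 := pow_ne_zero _ (norm_ne_zero_iff.mpr hψ)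
  -- anticommutator relation
  have hanti : ∀ v w : EuclideanSpace ℝ (Fin n),
      c v (c w ψ) + c w (c v ψ) = -((2 * (inner ℝ v w : ℝ)) • ψ) := by
    intro v w
    have h := hclif (v + w) ψ
    rw [map_add] at h
    simp only [LinearMap.add_apply, map_add] at h
    have hv := hclif v ψ
    have hw := hclif w ψ
    have hnorm : ‖v + w‖ ^ 2 = ‖v‖ ^ 2 + 2 * (inner ℝ v w : ℝ) + ‖w‖ ^ 2 :=
      norm_add_sq_real v w
    rw [hnorm] at h
    have hrest : c v (c w ψ) + c w (c v ψ)
        = -((‖v‖ ^ 2 + 2 * (inner ℝ v w : ℝ) + ‖w‖ ^ 2) • ψ)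
          - (c v (c v ψ) + c w (c w ψ)) := by rw [← h]; abel
    rw [hv, hw, add_smul, add_smul] at hrest
    rw [hrest]
    module
  -- key: Re⟨c v (c w ψ), ψ⟩ = -⟨v,w⟩ ‖ψ‖²
  have hkey : ∀ v w : EuclideanSpace ℝ (Fin n),
      (inner ℂ (c v (c w ψ)) ψ : ℂ).re = -((inner ℝ v w : ℝ) * ‖ψ‖ ^ 2) := by
    intro v w
    have hsym : (inner ℂ (c v (c w ψ)) ψ : ℂ).re = (inner ℂ (c w (c v ψ)) ψ : ℂ).re := by
      rw [hskew v (c w ψ) ψ, hskew w (c v ψ) ψ]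
      have : (inner ℂ (c w ψ) (c v ψ) : ℂ).re = (inner ℂ (c v ψ) (c w ψ) : ℂ).re := by
        rw [← inner_conj_symm (c v ψ) (c w ψ), Complex.conj_re]
      rw [this]
    have hsum : (inner ℂ (c v (c w ψ) + c w (c v ψ)) ψ : ℂ).re
        = -(2 * (inner ℝ v w : ℝ) * ‖ψ‖ ^ 2) := by
      rw [hanti v w, inner_neg_left,
        RCLike.real_smul_eq_coe_smul (K := ℂ) (2 * (inner ℝ v w : ℝ)) ψ,
        inner_smul_left, RCLike.conj_ofReal, inner_self_eq_norm_sq_to_K]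
      rw [← RCLike.ofReal_pow, ← RCLike.ofReal_mul, ← RCLike.ofReal_neg,
        ← RCLike.re_to_complex, RCLike.ofReal_re]
    rw [inner_add_left, Complex.add_re, hsym] at hsum
    linarith
  intro X Y
  rw [hδ X, hδ Y, map_neg, map_neg]
  simp only [inner_add_left, inner_neg_left, Complex.add_re, Complex.neg_re]
  rw [hkey X (E Y), hkey Y (E X)]
  have h1 : (inner ℝ X (E Y) : ℝ) = (inner ℝ (E Y) X : ℝ) := real_inner_comm _ _
  have h2 : (inner ℝ Y (E X) : ℝ) = (inner ℝ (E X) Y : ℝ) := real_inner_comm _ _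
  rw [h1, h2]
  field_simp
  ring
end

section
/- Let c be a Clifford multiplication on S over V = ℝⁿ, let ψ ∈ S be nonzero, let E : V → V be ℝ-linear, and suppose δ(X) = −c(E X)(ψ) for all X ∈ V. Then for all X, Y ∈ V one has Q^{ψ,δ}(X,Y) = (1/2)(⟨Y, E X⟩ − ⟨X, E Y⟩); that is, the tensor Q^{ψ,δ} equals the skew-symmetric part of E. -/
/-- If `δ X = -c (E X) ψ` for a Clifford multiplication `c`, then the
tensor `Q^{ψ,δ}` equals the skew-symmetric part of `E`. -/
theorem skew_tensor_eq_skew_part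
    {n : ℕ} (hn : 1 ≤ n) {S : Type*} [NormedAddCommGroup S] [InnerProductSpace ℂ S]
    (c : EuclideanSpace ℝ (Fin n) →ₗ[ℝ] (S →ₗ[ℂ] S))
    (hclif : ∀ (v : EuclideanSpace ℝ (Fin n)) (ψ : S), c v (c v ψ) = -((‖v‖ ^ 2 : ℝ) • ψ))
    (hskew : ∀ (v : EuclideanSpace ℝ (Fin n)) (φ ψ : S),
      (inner ℂ (c v φ) ψ : ℂ).re = -(inner ℂ φ (c v ψ) : ℂ).re)
    (ψ : S) (hψ : ψ ≠ 0)
    (E : EuclideanSpace ℝ (Fin n) →ₗ[ℝ] EuclideanSpace ℝ (Fin n))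
    (δ : EuclideanSpace ℝ (Fin n) → S)
    (hδ : ∀ X, δ X = -(c (E X) ψ)) :
    ∀ X Y : EuclideanSpace ℝ (Fin n),
      (1 / 2 : ℝ) * (inner ℂ (c Y (δ X) - c X (δ Y)) ψ : ℂ).re / ‖ψ‖ ^ 2
        = (1 / 2 : ℝ) * ((inner ℝ Y (E X) : ℝ) - (inner ℝ X (E Y) : ℝ)) := by
  have hψ2 : ‖ψ‖ ^ 2 ≠ 0 := pow_ne_zero _ (norm_ne_zero_iff.mpr hψ)
  have key : ∀ v w : EuclideanSpace ℝ (Fin n),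
      (inner ℂ (c v (c w ψ)) ψ : ℂ).re = -((inner ℝ v w : ℝ) * ‖ψ‖ ^ 2) := by
    intro v w
    have hsymm : (inner ℂ (c v (c w ψ)) ψ : ℂ).re = (inner ℂ (c w (c v ψ)) ψ : ℂ).re := by
      rw [hskew v (c w ψ) ψ, hskew w (c v ψ) ψ, ← inner_conj_symm, Complex.conj_re]
    have hanti : c v (c w ψ) + c w (c v ψ) = -((2 * (inner ℝ v w : ℝ)) • ψ) := by
      have hx : c v (c w ψ) + c w (c v ψ)
          = c (v + w) (c (v + w) ψ) - c v (c v ψ) - c w (c w ψ) := by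
        simp only [map_add, LinearMap.add_apply]
        abel
      have hnorm : ‖v + w‖ ^ 2 = ‖v‖ ^ 2 + 2 * (inner ℝ v w : ℝ) + ‖w‖ ^ 2 := by
        rw [norm_add_sq_real]
      rw [hx, hclif, hclif, hclif, hnorm]
      have : (‖v‖ ^ 2 + 2 * (inner ℝ v w : ℝ) + ‖w‖ ^ 2) • ψ
          = (‖v‖ ^ 2 : ℝ) • ψ + (2 * (inner ℝ v w : ℝ)) • ψ + (‖w‖ ^ 2 : ℝ) • ψ := by
        rw [← add_smul, ← add_smul]
      rw [this]
      abel
    have hre : (inner ℂ (c v (c w ψ) + c w (c v ψ)) ψ : ℂ).re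
        = -(2 * (inner ℝ v w : ℝ) * ‖ψ‖ ^ 2) := by
      rw [hanti, inner_neg_left, RCLike.real_smul_eq_coe_smul (K := ℂ), inner_smul_left]
      rw [inner_self_eq_norm_sq_to_K]
      simp only [Complex.neg_re, RCLike.conj_ofReal, ← Complex.ofReal_pow,
        ← Complex.ofReal_mul, Complex.ofReal_re]
      norm_cast
    rw [inner_add_left] at hre
    simp only [Complex.add_re] at hre
    rw [← hsymm] at hre
    linarith
  intro X Y
  rw [hδ, hδ]
  have h1 : c Y (-(c (E X) ψ)) = -(c Y (c (E X) ψ)) := map_neg _ _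
  have h2 : c X (-(c (E Y) ψ)) = -(c X (c (E Y) ψ)) := map_neg _ _
  rw [h1, h2, sub_neg_eq_add, inner_add_left, inner_neg_left]
  simp only [Complex.add_re, Complex.neg_re]
  rw [key, key]
  field_simp
  ring
end

section
/- Pointwise form of Proposition 3.1 (hypersurface with parallel ambient spinor): Let c be a Clifford multiplication on S over V = ℝ^{n+1}, let ν ∈ V be a unit vector, let h : V → V be ℝ-linear, let ψ ∈ S be nonzero, and set δ(X) = (1/2)·c(ν)(c(h X)(ψ)) for all X ∈ V (the induced covariant derivative of the leafwise spinor Φ = Ψ*, coming from the spinorial Gauss formula applied to a parallel ambient spinor). Define the leafwise energy–momentum tensor T^Φ(X,Y) = (1/2)·Re⟨c(ν)(c(X)(δ(Y))) + c(ν)(c(Y)(δ(X))), ψ⟩/‖ψ‖². Then: (i) for all X, Y orthogonal to ν, T^Φ(X,Y) = −(1/4)(⟨h X, Y⟩ + ⟨h Y, X⟩); in particular, if moreover ⟨h X, Y⟩ = ⟨X, h Y⟩ for all X, Y orthogonal to ν, then T^Φ(X,Y) = −(1/2)⟨h X, Y⟩; and (ii) for all X orthogonal to ν, (1/2)·Re⟨c(ν)(c(X)(δ(ν))),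 ψ⟩/‖ψ‖² = −(1/4)⟨X, h ν⟩. -/
/-- Pointwise form of Proposition 3.1 (hypersurface with parallel ambient
spinor): with `δ X = (1/2)·c(ν)(c(h X)(ψ))`, the leafwise energy-momentum tensor
satisfies `T^Φ(X,Y) = −(1/4)(⟨h X, Y⟩ + ⟨h Y, X⟩)` for `X, Y ⟂ ν` (hence `−(1/2)⟨h X, Y⟩`
when `h` is symmetric on `ν^⊥`), and `(1/2)·Re⟨c(ν)(c(X)(δ(ν))), ψ⟩/‖ψ‖² = −(1/4)⟨X, h ν⟩`
for `X ⟂ ν`. -/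
theorem hypersurface_energy_momentum
    {n : ℕ} (hn : 1 ≤ n) {S : Type*} [NormedAddCommGroup S] [InnerProductSpace ℂ S]
    (c : EuclideanSpace ℝ (Fin (n + 1)) →ₗ[ℝ] (S →ₗ[ℂ] S))
    (hclif : ∀ (v : EuclideanSpace ℝ (Fin (n + 1))) (ψ : S),
      c v (c v ψ) = -((‖v‖ ^ 2 : ℝ) • ψ))
    (hskew : ∀ (v : EuclideanSpace ℝ (Fin (n + 1))) (φ ψ : S),
      (inner ℂ (c v φ) ψ : ℂ).re = -(inner ℂ φ (c v ψ) : ℂ).re)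
    (ν : EuclideanSpace ℝ (Fin (n + 1))) (hν : ‖ν‖ = 1)
    (h : EuclideanSpace ℝ (Fin (n + 1)) →ₗ[ℝ] EuclideanSpace ℝ (Fin (n + 1)))
    (ψ : S) (hψ : ψ ≠ 0)
    (δ : EuclideanSpace ℝ (Fin (n + 1)) → S)
    (hδ : ∀ X, δ X = (1 / 2 : ℝ) • c ν (c (h X) ψ))
    (T : EuclideanSpace ℝ (Fin (n + 1)) → EuclideanSpace ℝ (Fin (n + 1)) → ℝ)
    (hT : ∀ X Y, T X Y
      = (1 / 2 : ℝ) * (inner ℂ (c ν (c X (δ Y)) + c ν (c Y (δ X))) ψ : ℂ).re / ‖ψ‖ ^ 2) :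
    (∀ X Y : EuclideanSpace ℝ (Fin (n + 1)), (inner ℝ X ν : ℝ) = 0 → (inner ℝ Y ν : ℝ) = 0 →
        T X Y = -(1 / 4 : ℝ) * ((inner ℝ (h X) Y : ℝ) + (inner ℝ (h Y) X : ℝ)))
    ∧ ((∀ X Y : EuclideanSpace ℝ (Fin (n + 1)), (inner ℝ X ν : ℝ) = 0 → (inner ℝ Y ν : ℝ) = 0 →
          (inner ℝ (h X) Y : ℝ) = (inner ℝ X (h Y) : ℝ)) →
        ∀ X Y : EuclideanSpace ℝ (Fin (n + 1)), (inner ℝ X ν : ℝ) = 0 → (inner ℝ Y ν : ℝ) = 0 →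
          T X Y = -(1 / 2 : ℝ) * (inner ℝ (h X) Y : ℝ))
    ∧ (∀ X : EuclideanSpace ℝ (Fin (n + 1)), (inner ℝ X ν : ℝ) = 0 →
        (1 / 2 : ℝ) * (inner ℂ (c ν (c X (δ ν))) ψ : ℂ).re / ‖ψ‖ ^ 2
          = -(1 / 4 : ℝ) * (inner ℝ X (h ν) : ℝ)) := by
  have hpsi : (‖ψ‖ : ℝ) ≠ 0 := norm_ne_zero_iff.mpr hψ
  -- anticommutation relation
  have anticomm : ∀ (u v : EuclideanSpace ℝ (Fin (n + 1))) (φ : S),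
      c u (c v φ) + c v (c u φ) = -((2 * (inner ℝ u v : ℝ)) • φ) := by
    intro u v φ
    have H := hclif (u + v) φ
    have hn2 : ‖u + v‖ ^ 2 = ‖u‖ ^ 2 + 2 * (inner ℝ u v : ℝ) + ‖v‖ ^ 2 := by
      exact norm_add_sq_real u v
    rw [map_add] at H
    simp only [LinearMap.add_apply, map_add] at H
    rw [hclif u φ, hclif v φ, hn2] at H
    have H2 : c u (c v φ) + c v (c u φ)
        = -((‖u‖ ^ 2 + 2 * (inner ℝ u v : ℝ) + ‖v‖ ^ 2) • φ)
          + (‖u‖ ^ 2 : ℝ) • φ + (‖v‖ ^ 2 : ℝ) • φ := by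
      rw [← H]; abel
    rw [H2]; module
  -- re-swap
  have reSwap : ∀ (a b : S), (inner ℂ a b : ℂ).re = (inner ℂ b a : ℂ).re := by
    intro a b
    rw [← inner_conj_symm a b]
    exact Complex.conj_re _
  have smulRe : ∀ (r : ℝ) (a b : S), (inner ℂ (r • a) b : ℂ).re = r * (inner ℂ a b : ℂ).re := by
    intro r a b
    rw [RCLike.real_smul_eq_coe_smul (K := ℂ), inner_smul_left]
    simp
  -- key real-part computation
  have keyRe : ∀ (X w : EuclideanSpace ℝ (Fin (n + 1))),
      (inner ℂ (c X (c w ψ)) ψ : ℂ).re = -((inner ℝ X w : ℝ) * ‖ψ‖ ^ 2) := by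
    intro X w
    have h1 : (inner ℂ (c X (c w ψ)) ψ : ℂ).re = (inner ℂ (c w (c X ψ)) ψ : ℂ).re := by
      rw [hskew X (c w ψ) ψ, reSwap (c w ψ) (c X ψ), ← hskew w (c X ψ) ψ]
    have h2 : (inner ℂ (c X (c w ψ) + c w (c X ψ)) ψ : ℂ).re
        = -(2 * (inner ℝ X w : ℝ)) * ‖ψ‖ ^ 2 := by
      rw [anticomm, inner_neg_left]
      simp only [Complex.neg_re, smulRe]
      have : (inner ℂ ψ ψ : ℂ).re = ‖ψ‖ ^ 2 := by
        simpa using inner_self_eq_norm_sq (𝕜 := ℂ) ψ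
      rw [this]
      ring
    rw [inner_add_left] at h2
    simp only [Complex.add_re] at h2
    rw [← h1] at h2
    linarith
  -- commuting Clifford past ν
  have key2 : ∀ X : EuclideanSpace ℝ (Fin (n + 1)), (inner ℝ X ν : ℝ) = 0 →
      ∀ φ : S, c ν (c X (c ν φ)) = c X φ := by
    intro X hX φ
    have hac := anticomm X ν φ
    rw [hX] at hac
    simp only [mul_zero, zero_smul, neg_zero] at hac
    have h1 : c X (c ν φ) = -(c ν (c X φ)) := by
      linear_combination (norm := abel) hac
    rw [h1, map_neg, hclif ν, hν]
    simp
  -- main term computation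
  have main : ∀ (X Y : EuclideanSpace ℝ (Fin (n + 1))), (inner ℝ X ν : ℝ) = 0 →
      (inner ℂ (c ν (c X (δ Y))) ψ : ℂ).re = -((1 / 2 : ℝ) * (inner ℝ X (h Y) : ℝ) * ‖ψ‖ ^ 2) := by
    intro X Y hX
    rw [hδ, LinearMap.map_smul_of_tower, LinearMap.map_smul_of_tower, key2 X hX,
      smulRe, keyRe]
    simp
    ring
  refine ⟨?_, ?_, ?_⟩
  · intro X Y hX hY
    rw [hT, inner_add_left]
    simp only [Complex.add_re]
    rw [main X Y hX, main Y X hY]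
    rw [real_inner_comm ((h : _ →ₗ[ℝ] _) X) Y, real_inner_comm ((h : _ →ₗ[ℝ] _) Y) X]
    field_simp
    ring
  · intro hsym X Y hX hY
    have h1 : T X Y = -(1 / 4 : ℝ) * ((inner ℝ (h X) Y : ℝ) + (inner ℝ (h Y) X : ℝ)) := by
      rw [hT, inner_add_left]
      simp only [Complex.add_re]
      rw [main X Y hX, main Y X hY]
      rw [real_inner_comm ((h : _ →ₗ[ℝ] _) X) Y, real_inner_comm ((h : _ →ₗ[ℝ] _) Y) X]
      field_simp
      ring
    rw [h1]
    have h2 : (inner ℝ (h Y) X : ℝ) = (inner ℝ (h X) Y : ℝ) := by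
      rw [real_inner_comm, hsym X Y hX hY, real_inner_comm]
    rw [h2]; ring
  · intro X hX
    rw [main X ν hX]
    field_simp
    ring
end

section
/- Pointwise form of Theorem 4.1 for the symmetric part (flow with transversal parallel spinor): Let c be a Clifford multiplication on S over V = ℝ^{n+1}, let ξ ∈ V be a unit vector, let h : V → V be ℝ-linear with ⟨h X, ξ⟩ = 0 for all X ∈ V, let ψ ∈ S be nonzero, and set δ(X) = (1/2)·c(ξ)(c(h X)(ψ)) for all X ∈ V (the covariant derivative of a spinor Ψ whose restriction to the normal bundle is parallel, coming from the spinorial Gauss formula for flows). Then: (i) for all Z, W orthogonal to ξ, T_ψ(Z,W) = −(1/4)(⟨Z, h W⟩ + ⟨W, h Z⟩); and (ii) for all Z orthogonal to ξ, T_ψ(ξ,Z) = −(1/4)⟨h ξ, Z⟩; in particular T_ψ(ξ,Z) = 0 for all such Z if and only if ⟨h ξ, Z⟩ = 0 for all Z orthogonal to ξ (minimality of the flow). -/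
/-- Pointwise form of Theorem 4.1 for the symmetric part (flow with
transversal parallel spinor): with `δ X = (1/2)·c(ξ)(c(h X)(ψ))`,
`T_ψ(Z,W) = −(1/4)(⟨Z, h W⟩ + ⟨W, h Z⟩)` for `Z, W ⟂ ξ`, and
`T_ψ(ξ,Z) = −(1/4)⟨h ξ, Z⟩` for `Z ⟂ ξ`; in particular `T_ψ(ξ,·)` vanishes on `ξ^⊥`
iff `h ξ ⟂ ξ^⊥` (minimality of the flow). -/
theorem flow_energy_momentum_symmetric
    {n : ℕ} (hn : 1 ≤ n) {S : Type*} [NormedAddCommGroup S] [InnerProductSpace ℂ S]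
    (c : EuclideanSpace ℝ (Fin (n + 1)) →ₗ[ℝ] (S →ₗ[ℂ] S))
    (hclif : ∀ (v : EuclideanSpace ℝ (Fin (n + 1))) (ψ : S),
      c v (c v ψ) = -((‖v‖ ^ 2 : ℝ) • ψ))
    (hskew : ∀ (v : EuclideanSpace ℝ (Fin (n + 1))) (φ ψ : S),
      (inner ℂ (c v φ) ψ : ℂ).re = -(inner ℂ φ (c v ψ) : ℂ).re)
    (ξ : EuclideanSpace ℝ (Fin (n + 1))) (hξ : ‖ξ‖ = 1)
    (h : EuclideanSpace ℝ (Fin (n + 1)) →ₗ[ℝ] EuclideanSpace ℝ (Fin (n + 1)))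
    (hhξ : ∀ X : EuclideanSpace ℝ (Fin (n + 1)), (inner ℝ (h X) ξ : ℝ) = 0)
    (ψ : S) (hψ : ψ ≠ 0)
    (δ : EuclideanSpace ℝ (Fin (n + 1)) → S)
    (hδ : ∀ X, δ X = (1 / 2 : ℝ) • c ξ (c (h X) ψ))
    (T : EuclideanSpace ℝ (Fin (n + 1)) → EuclideanSpace ℝ (Fin (n + 1)) → ℝ)
    (hT : ∀ X Y, T X Y
      = (1 / 2 : ℝ) * (inner ℂ (c ξ (c X (δ Y)) + c ξ (c Y (δ X))) ψ : ℂ).re / ‖ψ‖ ^ 2) :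
    (∀ Z W : EuclideanSpace ℝ (Fin (n + 1)), (inner ℝ Z ξ : ℝ) = 0 → (inner ℝ W ξ : ℝ) = 0 →
        T Z W = -(1 / 4 : ℝ) * ((inner ℝ Z (h W) : ℝ) + (inner ℝ W (h Z) : ℝ)))
    ∧ (∀ Z : EuclideanSpace ℝ (Fin (n + 1)), (inner ℝ Z ξ : ℝ) = 0 →
        T ξ Z = -(1 / 4 : ℝ) * (inner ℝ (h ξ) Z : ℝ))
    ∧ ((∀ Z : EuclideanSpace ℝ (Fin (n + 1)), (inner ℝ Z ξ : ℝ) = 0 → T ξ Z = 0)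
        ↔ (∀ Z : EuclideanSpace ℝ (Fin (n + 1)), (inner ℝ Z ξ : ℝ) = 0 →
            (inner ℝ (h ξ) Z : ℝ) = 0)) := by
  have hψ2 : (0:ℝ) < ‖ψ‖ ^ 2 := pow_pos (norm_pos_iff.mpr hψ) 2
  have hresmul : ∀ (r : ℝ) (x y : S), (inner ℂ ((r : ℝ) • x) y : ℂ).re = r * (inner ℂ x y : ℂ).re := by
    intro r x y
    rw [show (r : ℝ) • x = ((r : ℂ) • x) from (Complex.coe_smul r x).symm, inner_smul_left]
    simp
  -- polarized Clifford relation
  have polar : ∀ (v w : EuclideanSpace ℝ (Fin (n+1))) (s : S),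
      c v (c w s) + c w (c v s) = -((2 * (inner ℝ v w : ℝ)) • s) := by
    intro v w s
    have h1 := hclif (v + w) s
    have h2 := hclif v s
    have h3 := hclif w s
    have hnrm : ‖v + w‖ ^ 2 = ‖v‖ ^ 2 + 2 * (inner ℝ v w : ℝ) + ‖w‖ ^ 2 := by
      rw [norm_add_sq_real]
    have hsplit : c (v + w) (c (v + w) s)
        = c v (c v s) + (c v (c w s) + c w (c v s)) + c w (c w s) := by
      simp only [map_add, LinearMap.add_apply]
      abel
    rw [hsplit, h2, h3, hnrm] at h1
    have h4 : c v (c w s) + c w (c v s)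
        = -((‖v‖ ^ 2 + 2 * (inner ℝ v w : ℝ) + ‖w‖ ^ 2) • s)
          - (-((‖v‖ ^ 2 : ℝ) • s)) - (-((‖w‖ ^ 2 : ℝ) • s)) := by
      rw [← h1]; abel
    rw [h4]; module
  -- key: Re⟪c a (c b s), s⟫ = -⟨a,b⟩‖s‖²
  have key : ∀ (a b : EuclideanSpace ℝ (Fin (n+1))) (s : S),
      (inner ℂ (c a (c b s)) s : ℂ).re = -((inner ℝ a b : ℝ) * ‖s‖ ^ 2) := by
    intro a b s
    have e1 : (inner ℂ (c a (c b s)) s : ℂ).re = -(inner ℂ (c b s) (c a s) : ℂ).re :=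
      hskew a (c b s) s
    have e2 : (inner ℂ (c b (c a s)) s : ℂ).re = -(inner ℂ (c a s) (c b s) : ℂ).re :=
      hskew b (c a s) s
    have e3 : (inner ℂ (c b s) (c a s) : ℂ).re = (inner ℂ (c a s) (c b s) : ℂ).re := by
      rw [← inner_conj_symm]; exact Complex.conj_re _
    have e4 : (inner ℂ (c a (c b s) + c b (c a s)) s : ℂ).re
        = -(2 * (inner ℝ a b : ℝ) * ‖s‖ ^ 2) := by
      rw [polar a b s]
      have : (-((2 * (inner ℝ a b : ℝ)) • s)) = ((-(2 * (inner ℝ a b : ℝ)) : ℝ) • s) := by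
        module
      rw [this, hresmul]
      have h5 : (inner ℂ s s : ℂ) = (‖s‖ ^ 2 : ℝ) := by
        exact_mod_cast inner_self_eq_norm_sq_to_K (𝕜 := ℂ) s
      rw [h5, Complex.ofReal_re]
      ring
    rw [inner_add_left, Complex.add_re, e1, e2, e3] at e4
    linarith
  -- compute Re⟪c ξ (c X (δ Y)), ψ⟫
  have keyC : ∀ X Y, (inner ℂ (c ξ (c X (δ Y))) ψ : ℂ).re
      = -(1/2) * (inner ℝ X (h Y) : ℝ) * ‖ψ‖ ^ 2 := by
    intro X Y
    rw [hδ Y]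
    set w := c (h Y) ψ with hw
    have hc1 : c X (c ξ w) = -(c ξ (c X w)) - (2 * (inner ℝ X ξ : ℝ)) • w := by
      have hp := polar X ξ w
      have h' : c X (c ξ w) = -((2 * (inner ℝ X ξ : ℝ)) • w) - c ξ (c X w) :=
        eq_sub_of_add_eq hp
      rw [h']; abel
    have hc2 : c ξ (c X (c ξ w)) = c X w - (2 * (inner ℝ X ξ : ℝ)) • c ξ w := by
      rw [hc1, map_sub, map_neg, hclif ξ (c X w), LinearMap.map_smul_of_tower, hξ]
      module
    have hξhY : (inner ℝ ξ (h Y) : ℝ) = 0 := by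
      rw [real_inner_comm]; exact hhξ Y
    calc (inner ℂ (c ξ (c X ((1 / 2 : ℝ) • c ξ w))) ψ : ℂ).re
        = (inner ℂ ((1 / 2 : ℝ) • c ξ (c X (c ξ w))) ψ : ℂ).re := by
          rw [LinearMap.map_smul_of_tower, LinearMap.map_smul_of_tower]
      _ = (1/2 : ℝ) * (inner ℂ (c ξ (c X (c ξ w))) ψ : ℂ).re := by
          rw [hresmul]
      _ = (1/2 : ℝ) * ((inner ℂ (c X w) ψ : ℂ).re
            - 2 * (inner ℝ X ξ : ℝ) * (inner ℂ (c ξ w) ψ : ℂ).re) := by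
          rw [hc2, inner_sub_left, Complex.sub_re]
          rw [hresmul]
      _ = -(1/2) * (inner ℝ X (h Y) : ℝ) * ‖ψ‖ ^ 2 := by
          rw [hw, key X (h Y) ψ, key ξ (h Y) ψ, hξhY]
          ring
  have hTXY : ∀ X Y, T X Y = -(1/4 : ℝ) * ((inner ℝ X (h Y) : ℝ) + (inner ℝ Y (h X) : ℝ)) := by
    intro X Y
    rw [hT X Y, inner_add_left, Complex.add_re, keyC X Y, keyC Y X]
    field_simp
    ring
  refine ⟨fun Z W _ _ => hTXY Z W, ?_, ?_⟩
  · intro Z hZ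
    rw [hTXY ξ Z]
    have h1 : (inner ℝ ξ (h Z) : ℝ) = 0 := by rw [real_inner_comm]; exact hhξ Z
    have h2 : (inner ℝ Z (h ξ) : ℝ) = (inner ℝ (h ξ) Z : ℝ) := real_inner_comm _ _
    rw [h1, h2]; ring
  · constructor
    · intro H Z hZ
      have := H Z hZ
      rw [hTXY ξ Z] at this
      have h1 : (inner ℝ ξ (h Z) : ℝ) = 0 := by rw [real_inner_comm]; exact hhξ Z
      have h2 : (inner ℝ Z (h ξ) : ℝ) = (inner ℝ (h ξ) Z : ℝ) := real_inner_comm _ _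
      rw [h1, h2] at this
      linarith
    · intro H Z hZ
      rw [hTXY ξ Z]
      have h1 : (inner ℝ ξ (h Z) : ℝ) = 0 := by rw [real_inner_comm]; exact hhξ Z
      have h2 : (inner ℝ Z (h ξ) : ℝ) = (inner ℝ (h ξ) Z : ℝ) := real_inner_comm _ _
      rw [h1, h2, H Z hZ]; ring
end

section
/- Pointwise form of Theorem 4.1 and Proposition 4.2 for the skew-symmetric part: Let c be a Clifford multiplication on S over V = ℝ^{n+1}, let ξ ∈ V be a unit vector, let h : V → V be ℝ-linear with ⟨h X, ξ⟩ = 0 for all X ∈ V, let ψ ∈ S be nonzero, and set δ(X) = (1/2)·c(ξ)(c(h X)(ψ)) for all X ∈ V. Then for all Z, W orthogonal to ξ, Q_ψ(Z,W) = (1/4)(⟨Z, h W⟩ − ⟨W, h Z⟩). In particular, if h is skew-symmetric on the orthogonal complement of ξ (the Riemannian flow condition, in which case h(Z) is the O'Neill tensor A_Z ξ), then Q_ψ(Z,W) = −(1/2)⟨h Z, W⟩. -/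
/-- Pointwise form of Theorem 4.1 / Proposition 4.2 for the skew-symmetric
part: with `δ X = (1/2)·c(ξ)(c(h X)(ψ))`, for `Z, W ⟂ ξ` one has
`Q_ψ(Z,W) = (1/4)(⟨Z, h W⟩ − ⟨W, h Z⟩)`; if moreover `h` is skew-symmetric on `ξ^⊥`
(Riemannian flow condition, O'Neill tensor), then `Q_ψ(Z,W) = −(1/2)⟨h Z, W⟩`. -/
theorem flow_skew_tensor_oneill
    {n : ℕ} (hn : 1 ≤ n) {S : Type*} [NormedAddCommGroup S] [InnerProductSpace ℂ S]
    (c : EuclideanSpace ℝ (Fin (n + 1)) →ₗ[ℝ] (S →ₗ[ℂ] S))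
    (hclif : ∀ (v : EuclideanSpace ℝ (Fin (n + 1))) (ψ : S),
      c v (c v ψ) = -((‖v‖ ^ 2 : ℝ) • ψ))
    (hskew : ∀ (v : EuclideanSpace ℝ (Fin (n + 1))) (φ ψ : S),
      (inner ℂ (c v φ) ψ : ℂ).re = -(inner ℂ φ (c v ψ) : ℂ).re)
    (ξ : EuclideanSpace ℝ (Fin (n + 1))) (hξ : ‖ξ‖ = 1)
    (h : EuclideanSpace ℝ (Fin (n + 1)) →ₗ[ℝ] EuclideanSpace ℝ (Fin (n + 1)))
    (hhξ : ∀ X : EuclideanSpace ℝ (Fin (n + 1)), (inner ℝ (h X) ξ : ℝ) = 0)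
    (ψ : S) (hψ : ψ ≠ 0)
    (δ : EuclideanSpace ℝ (Fin (n + 1)) → S)
    (hδ : ∀ X, δ X = (1 / 2 : ℝ) • c ξ (c (h X) ψ))
    (Q : EuclideanSpace ℝ (Fin (n + 1)) → EuclideanSpace ℝ (Fin (n + 1)) → ℝ)
    (hQ : ∀ X Y, Q X Y
      = (1 / 2 : ℝ) * (inner ℂ (c ξ (c Y (δ X)) - c ξ (c X (δ Y))) ψ : ℂ).re / ‖ψ‖ ^ 2) :
    (∀ Z W : EuclideanSpace ℝ (Fin (n + 1)), (inner ℝ Z ξ : ℝ) = 0 → (inner ℝ W ξ : ℝ) = 0 →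
        Q Z W = (1 / 4 : ℝ) * ((inner ℝ Z (h W) : ℝ) - (inner ℝ W (h Z) : ℝ)))
    ∧ ((∀ Z W : EuclideanSpace ℝ (Fin (n + 1)), (inner ℝ Z ξ : ℝ) = 0 → (inner ℝ W ξ : ℝ) = 0 →
          (inner ℝ (h Z) W : ℝ) = -(inner ℝ Z (h W) : ℝ)) →
        ∀ Z W : EuclideanSpace ℝ (Fin (n + 1)), (inner ℝ Z ξ : ℝ) = 0 → (inner ℝ W ξ : ℝ) = 0 →
          Q Z W = -(1 / 2 : ℝ) * (inner ℝ (h Z) W : ℝ)) := by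
  -- real smul in the first slot of the inner product
  have hsm : ∀ (r : ℝ) (x y : S), (inner ℂ (r • x) y : ℂ).re = r * (inner ℂ x y : ℂ).re := by
    intro r x y
    rw [← algebraMap_smul ℂ r x, Complex.coe_algebraMap, inner_smul_left]
    simp [Complex.mul_re]
  -- anticommutation relation
  have hac : ∀ (u v : EuclideanSpace ℝ (Fin (n + 1))) (φ : S),
      c u (c v φ) + c v (c u φ) = -((2 * (inner ℝ u v : ℝ)) • φ) := by
    intro u v φ
    have h1 := hclif (u + v) φ
    simp only [map_add, LinearMap.add_apply] at h1
    rw [hclif u, hclif v, norm_add_sq_real] at h1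
    linear_combination (norm := module) h1
  -- real part of ⟨c u (c v ψ), ψ⟩
  have hre : ∀ (u v : EuclideanSpace ℝ (Fin (n + 1))),
      (inner ℂ (c u (c v ψ)) ψ : ℂ).re = -((inner ℝ u v : ℝ) * ‖ψ‖ ^ 2) := by
    intro u v
    have hA : (inner ℂ (c v (c u ψ)) ψ : ℂ).re = (inner ℂ (c u (c v ψ)) ψ : ℂ).re := by
      rw [hskew v (c u ψ) ψ, hskew u ψ (c v ψ), neg_neg]
      conv_rhs => rw [← inner_conj_symm]
      exact (Complex.conj_re _).symm
    have hB : (inner ℂ (c u (c v ψ) + c v (c u ψ)) ψ : ℂ).re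
        = -(2 * (inner ℝ u v : ℝ)) * ‖ψ‖ ^ 2 := by
      rw [hac u v ψ]
      rw [show -((2 * (inner ℝ u v : ℝ)) • ψ) = (-(2 * (inner ℝ u v : ℝ))) • ψ by module]
      rw [hsm]
      congr 1
      exact inner_self_eq_norm_sq (𝕜 := ℂ) ψ
    rw [inner_add_left] at hB
    simp only [Complex.add_re] at hB
    rw [hA] at hB
    linarith
  -- reduce c ξ (c Y (δ X)) for Y ⊥ ξ
  have hred : ∀ (X Y : EuclideanSpace ℝ (Fin (n + 1))), (inner ℝ Y ξ : ℝ) = 0 →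
      c ξ (c Y (δ X)) = (1 / 2 : ℝ) • c Y (c (h X) ψ) := by
    intro X Y hY
    rw [hδ X, LinearMap.map_smul_of_tower, LinearMap.map_smul_of_tower]
    congr 1
    have hanti : c Y (c ξ (c (h X) ψ)) = - c ξ (c Y (c (h X) ψ)) := by
      have h0 := hac Y ξ (c (h X) ψ)
      rw [hY] at h0
      simp only [mul_zero, zero_smul, neg_zero] at h0
      linear_combination (norm := module) h0
    rw [hanti, map_neg, hclif ξ, hξ]
    module
  have hQval : ∀ Z W : EuclideanSpace ℝ (Fin (n + 1)), (inner ℝ Z ξ : ℝ) = 0 →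
      (inner ℝ W ξ : ℝ) = 0 →
      Q Z W = (1 / 4 : ℝ) * ((inner ℝ Z (h W) : ℝ) - (inner ℝ W (h Z) : ℝ)) := by
    intro Z W hZ hW
    have hpsi : ‖ψ‖ ^ 2 ≠ 0 := pow_ne_zero 2 (norm_ne_zero_iff.mpr hψ)
    rw [hQ, hred Z W hW, hred W Z hZ]
    rw [show (1 / 2 : ℝ) • c W (c (h Z) ψ) - (1 / 2 : ℝ) • c Z (c (h W) ψ)
        = (1 / 2 : ℝ) • (c W (c (h Z) ψ) - c Z (c (h W) ψ)) by module]
    rw [hsm, inner_sub_left, Complex.sub_re, hre W (h Z), hre Z (h W)]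
    field_simp
    ring
  refine ⟨hQval, fun hsk Z W hZ hW => ?_⟩
  rw [hQval Z W hZ hW]
  have h1 := hsk Z W hZ hW
  have h2 : (inner ℝ W (h Z) : ℝ) = (inner ℝ (h Z) W : ℝ) := real_inner_comm _ _
  rw [h2]
  linarith
end

section
/- Pointwise Dirac eigenvalue computation in the 3-dimensional case (direction 1 ⇒ 2 of Theorem 6.1): Let c be a Clifford multiplication on S over V = ℝ³, let (ξ, e₁, e₂) be an orthonormal basis of V, let ψ ∈ S be nonzero and satisfy the volume condition c(ξ)(c(e₁)(c(e₂)(ψ))) = −ψ (i.e. the complex volume form ω₃ = −ξ·e₁·e₂ acts as the identity on ψ), and let b ∈ ℝ. Let h : V → V be the linear map with h(ξ) = 0, h(e₁) = b·e₂, h(e₂) = −b·e₁, and set δ(ξ) = (1/4)(c(e₁)(c(h e₁)(ψ)) + c(e₂)(c(h e₂)(ψ))) and δ(e_i) = (1/2)·c(ξ)(c(h e_i)(ψ)) for i = 1, 2 (the derivatives of a spinor whose restriction to the normal bundle of the minimal Riemannian flow generated by ξ is parallel). Then the Dirac value satisfies c(ξ)(δ(ξ)) + c(e₁)(δ(e₁))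 + c(e₂)(δ(e₂)) = (b/2)·ψ. -/
/-- Pointwise Dirac eigenvalue computation in dimension 3 (direction
1 ⇒ 2 of Theorem 6.1): with the volume condition `ξ·e₁·e₂·ψ = −ψ`, `h` the minimal
Riemannian flow Weingarten map `h ξ = 0`, `h e₁ = b e₂`, `h e₂ = −b e₁`, and `δ` the
induced covariant derivatives, the Dirac value is `(b/2)·ψ`. -/
theorem dirac_eigenvalue_dim3
    {S : Type*} [NormedAddCommGroup S] [InnerProductSpace ℂ S]
    (c : EuclideanSpace ℝ (Fin 3) →ₗ[ℝ] (S →ₗ[ℂ] S))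
    (hclif : ∀ (v : EuclideanSpace ℝ (Fin 3)) (ψ : S), c v (c v ψ) = -((‖v‖ ^ 2 : ℝ) • ψ))
    (hskew : ∀ (v : EuclideanSpace ℝ (Fin 3)) (φ ψ : S),
      (inner ℂ (c v φ) ψ : ℂ).re = -(inner ℂ φ (c v ψ) : ℂ).re)
    (ξ e₁ e₂ : EuclideanSpace ℝ (Fin 3)) (hON : Orthonormal ℝ ![ξ, e₁, e₂])
    (ψ : S) (hψ : ψ ≠ 0)
    (hvol : c ξ (c e₁ (c e₂ ψ)) = -ψ)
    (b : ℝ)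
    (h : EuclideanSpace ℝ (Fin 3) →ₗ[ℝ] EuclideanSpace ℝ (Fin 3))
    (hhξ : h ξ = 0) (hh1 : h e₁ = b • e₂) (hh2 : h e₂ = -b • e₁)
    (δ : EuclideanSpace ℝ (Fin 3) → S)
    (hδξ : δ ξ = (1 / 4 : ℝ) • (c e₁ (c (h e₁) ψ) + c e₂ (c (h e₂) ψ)))
    (hδ1 : δ e₁ = (1 / 2 : ℝ) • c ξ (c (h e₁) ψ))
    (hδ2 : δ e₂ = (1 / 2 : ℝ) • c ξ (c (h e₂) ψ)) :
    c ξ (δ ξ) + c e₁ (δ e₁) + c e₂ (δ e₂) = (b / 2 : ℝ) • ψ := by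
  -- anticommutation for orthogonal vectors
  have key : ∀ u v : EuclideanSpace ℝ (Fin 3), (inner ℝ u v : ℝ) = 0 →
      ∀ φ : S, c u (c v φ) = - (c v (c u φ)) := by
    intro u v huv φ
    have h1 := hclif (u + v) φ
    have hn : ‖u + v‖ ^ 2 = ‖u‖ ^ 2 + ‖v‖ ^ 2 := by
      rw [@norm_add_sq_real, huv]; ring
    rw [map_add, hn] at h1
    simp only [LinearMap.add_apply, map_add] at h1
    rw [hclif u φ, hclif v φ] at h1
    have hz : c u (c v φ) + c v (c u φ) = 0 := by
      have h2 : c u (c v φ) + c v (c u φ) =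
          (-((‖u‖ ^ 2 : ℝ) • φ) + c v (c u φ) + (c u (c v φ) + -((‖v‖ ^ 2 : ℝ) • φ)))
            + ((‖u‖ ^ 2 : ℝ) • φ + (‖v‖ ^ 2 : ℝ) • φ) := by abel
      rw [h2, h1, add_smul]; abel
    exact eq_neg_of_add_eq_zero_left hz
  have o01 : (inner ℝ ξ e₁ : ℝ) = 0 := by
    simpa using hON.2 (show (0 : Fin 3) ≠ 1 by decide)
  have o02 : (inner ℝ ξ e₂ : ℝ) = 0 := by
    simpa using hON.2 (show (0 : Fin 3) ≠ 2 by decide)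
  have o12 : (inner ℝ e₁ e₂ : ℝ) = 0 := by
    simpa using hON.2 (show (1 : Fin 3) ≠ 2 by decide)
  have o10 : (inner ℝ e₁ ξ : ℝ) = 0 := by rw [real_inner_comm]; exact o01
  have o20 : (inner ℝ e₂ ξ : ℝ) = 0 := by rw [real_inner_comm]; exact o02
  have o21 : (inner ℝ e₂ e₁ : ℝ) = 0 := by rw [real_inner_comm]; exact o12
  -- useful anticommutation instances
  have k21 : c e₂ (c e₁ ψ) = -(c e₁ (c e₂ ψ)) := key e₂ e₁ o21 ψ
  have k1ξ : c e₁ (c ξ (c e₂ ψ)) = -(c ξ (c e₁ (c e₂ ψ))) := key e₁ ξ o10 _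
  have k2ξ : c e₂ (c ξ (c e₁ ψ)) = -(c ξ (c e₂ (c e₁ ψ))) := key e₂ ξ o20 _
  rw [hδξ, hδ1, hδ2, hh1, hh2]
  simp only [map_smul, LinearMap.smul_apply, map_add, map_neg, LinearMap.neg_apply,
    neg_smul, smul_neg, LinearMap.map_smul_of_tower]
  rw [k21, k1ξ, k2ξ, k21, hvol]
  simp only [map_neg, map_smul, LinearMap.map_smul_of_tower, hvol, smul_neg, neg_neg]
  module
end

section
/- Pointwise computations for Example 3 (the product S¹ × S²): Let c be a Clifford multiplication on S over V = ℝ³, let (ξ, e₁, e₂) be an orthonormal basis of V, let ψ ∈ S be nonzero and satisfy the volume condition c(ξ)(c(e₁)(c(e₂)(ψ))) = −ψ, and define δ : V → S on the basis by δ(ξ) = 0, δ(e₁) = (1/2)·c(e₂)(ψ), δ(e₂) = −(1/2)·c(e₁)(ψ) (the covariant derivatives of the spinor induced by a Killing spinor on S² with Killing number 1/2). Then: (i) c(ξ)(δ(ξ)) + c(e₁)(δ(e₁)) + c(e₂)(δ(e₂)) = c(ξ)(ψ), i.e. D_M Ψ = ξ·Ψ; (ii) T^{ψ,δ}(X,Y)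 = 0 for all X, Y in the basis (ξ, e₁, e₂); and (iii) Q^{ψ,δ}(e₁,e₂) = −1/2 while Q^{ψ,δ}(ξ,e₁) = Q^{ψ,δ}(ξ,e₂) = 0. -/
section aux
variable {S : Type*} [NormedAddCommGroup S] [InnerProductSpace ℂ S]

lemma my_re_symm (a b : S) : (inner ℂ a b : ℂ).re = (inner ℂ b a : ℂ).re := by
  rw [← inner_conj_symm a b]; exact Complex.conj_re _

lemma my_re_smul (r : ℝ) (a b : S) :
    (inner ℂ (r • a) b : ℂ).re = r * (inner ℂ a b : ℂ).re := by
  rw [show r • a = (r : ℂ) • a by norm_cast, inner_smul_left]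
  simp

lemma my_re_self (ψ : S) : (inner ℂ ψ ψ : ℂ).re = ‖ψ‖ ^ 2 := by
  have h := inner_self_eq_norm_sq (𝕜 := ℂ) ψ
  simpa using h

lemma my_anticomm (c : EuclideanSpace ℝ (Fin 3) →ₗ[ℝ] (S →ₗ[ℂ] S))
    (hclif : ∀ (v : EuclideanSpace ℝ (Fin 3)) (ψ : S), c v (c v ψ) = -((‖v‖ ^ 2 : ℝ) • ψ))
    (u v : EuclideanSpace ℝ (Fin 3)) (huv : (inner ℝ u v : ℝ) = 0) (ψ : S) :
    c u (c v ψ) = -(c v (c u ψ)) := by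
  have h := hclif (u + v) ψ
  rw [map_add, norm_add_sq_real, huv] at h
  simp only [LinearMap.add_apply, map_add, hclif u, hclif v] at h
  have h2 : ((‖u‖^2 + 2*0 + ‖v‖^2 : ℝ)) • ψ = ‖u‖^2 • ψ + ‖v‖^2 • ψ := by
    rw [add_smul, add_smul]; simp
  rw [h2] at h
  calc c u (c v ψ)
      = (-(‖u‖^2 • ψ) + c v (c u ψ) + (c u (c v ψ) + -(‖v‖^2 • ψ)))
        + (‖u‖^2 • ψ + ‖v‖^2 • ψ) - c v (c u ψ) := by abel
    _ = -(‖u‖ ^ 2 • ψ + ‖v‖ ^ 2 • ψ) + (‖u‖^2 • ψ + ‖v‖^2 • ψ) - c v (c u ψ) := by rw [h]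
    _ = -(c v (c u ψ)) := by abel

lemma my_skew2 (c : EuclideanSpace ℝ (Fin 3) →ₗ[ℝ] (S →ₗ[ℂ] S))
    (hclif : ∀ (v : EuclideanSpace ℝ (Fin 3)) (ψ : S), c v (c v ψ) = -((‖v‖ ^ 2 : ℝ) • ψ))
    (hskew : ∀ (v : EuclideanSpace ℝ (Fin 3)) (φ ψ : S),
      (inner ℂ (c v φ) ψ : ℂ).re = -(inner ℂ φ (c v ψ) : ℂ).re)
    (u v : EuclideanSpace ℝ (Fin 3)) (huv : (inner ℝ u v : ℝ) = 0) (ψ : S) :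
    (inner ℂ (c u (c v ψ)) ψ : ℂ).re = 0 := by
  have h1 : (inner ℂ (c u (c v ψ)) ψ : ℂ).re = -(inner ℂ (c v ψ) (c u ψ) : ℂ).re :=
    hskew u (c v ψ) ψ
  have h2 : (inner ℂ (c u (c v ψ)) ψ : ℂ).re = (inner ℂ (c v ψ) (c u ψ) : ℂ).re := by
    rw [my_anticomm c hclif u v huv ψ, inner_neg_left]
    have h3 : (inner ℂ (c v (c u ψ)) ψ : ℂ).re = -(inner ℂ (c u ψ) (c v ψ) : ℂ).re :=
      hskew v _ _
    simp only [Complex.neg_re, h3, neg_neg]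
    exact my_re_symm _ _
  linarith

end aux

/-- Pointwise computations for Example 3 (`S¹ × S²`): with
`δ ξ = 0`, `δ e₁ = (1/2)·e₂·ψ`, `δ e₂ = −(1/2)·e₁·ψ` and the volume condition, one has
`D_M Ψ = ξ·Ψ`, `T^{ψ,δ} = 0` on the basis, `Q^{ψ,δ}(e₁,e₂) = −1/2` and
`Q^{ψ,δ}(ξ,e₁) = Q^{ψ,δ}(ξ,e₂) = 0`. -/
theorem example_S1_S2
    {S : Type*} [NormedAddCommGroup S] [InnerProductSpace ℂ S]
    (c : EuclideanSpace ℝ (Fin 3) →ₗ[ℝ] (S →ₗ[ℂ] S))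
    (hclif : ∀ (v : EuclideanSpace ℝ (Fin 3)) (ψ : S), c v (c v ψ) = -((‖v‖ ^ 2 : ℝ) • ψ))
    (hskew : ∀ (v : EuclideanSpace ℝ (Fin 3)) (φ ψ : S),
      (inner ℂ (c v φ) ψ : ℂ).re = -(inner ℂ φ (c v ψ) : ℂ).re)
    (ξ e₁ e₂ : EuclideanSpace ℝ (Fin 3)) (hON : Orthonormal ℝ ![ξ, e₁, e₂])
    (ψ : S) (hψ : ψ ≠ 0)
    (hvol : c ξ (c e₁ (c e₂ ψ)) = -ψ)
    (δ : EuclideanSpace ℝ (Fin 3) → S)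
    (hδξ : δ ξ = 0)
    (hδ1 : δ e₁ = (1 / 2 : ℝ) • c e₂ ψ)
    (hδ2 : δ e₂ = -((1 / 2 : ℝ) • c e₁ ψ))
    (T Q : EuclideanSpace ℝ (Fin 3) → EuclideanSpace ℝ (Fin 3) → ℝ)
    (hT : ∀ X Y, T X Y
      = (1 / 2 : ℝ) * (inner ℂ (c X (δ Y) + c Y (δ X)) ψ : ℂ).re / ‖ψ‖ ^ 2)
    (hQ : ∀ X Y, Q X Y
      = (1 / 2 : ℝ) * (inner ℂ (c Y (δ X) - c X (δ Y)) ψ : ℂ).re / ‖ψ‖ ^ 2) :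
    c ξ (δ ξ) + c e₁ (δ e₁) + c e₂ (δ e₂) = c ξ ψ
    ∧ (∀ i j : Fin 3, T (![ξ, e₁, e₂] i) (![ξ, e₁, e₂] j) = 0)
    ∧ Q e₁ e₂ = -(1 / 2 : ℝ) ∧ Q ξ e₁ = 0 ∧ Q ξ e₂ = 0 := by
  have hnξ : ‖ξ‖ = 1 := by have := hON.1 0; simpa using this
  have hn1 : ‖e₁‖ = 1 := by have := hON.1 1; simpa using this
  have hn2 : ‖e₂‖ = 1 := by have := hON.1 2; simpa using this
  have hξ1 : (inner ℝ ξ e₁ : ℝ) = 0 := by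
    have := hON.2 (by decide : (0:Fin 3) ≠ 1); simpa using this
  have hξ2 : (inner ℝ ξ e₂ : ℝ) = 0 := by
    have := hON.2 (by decide : (0:Fin 3) ≠ 2); simpa using this
  have h12 : (inner ℝ e₁ e₂ : ℝ) = 0 := by
    have := hON.2 (by decide : (1:Fin 3) ≠ 2); simpa using this
  have h21 : (inner ℝ e₂ e₁ : ℝ) = 0 := by rw [real_inner_comm]; exact h12
  have hψ2 : (‖ψ‖ : ℝ) ^ 2 ≠ 0 := pow_ne_zero _ (norm_ne_zero_iff.mpr hψ)
  have vξ1 : (inner ℂ (c ξ (c e₂ ψ)) ψ : ℂ).re = 0 := my_skew2 c hclif hskew ξ e₂ hξ2 ψ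
  have vξ1' : (inner ℂ (c ξ (c e₁ ψ)) ψ : ℂ).re = 0 := my_skew2 c hclif hskew ξ e₁ hξ1 ψ
  have v12 : (inner ℂ (c e₁ (c e₂ ψ)) ψ : ℂ).re = 0 := my_skew2 c hclif hskew e₁ e₂ h12 ψ
  have v21 : (inner ℂ (c e₂ (c e₁ ψ)) ψ : ℂ).re = 0 := my_skew2 c hclif hskew e₂ e₁ h21 ψ
  -- part (i)
  have hkey : c e₁ (c e₂ ψ) = c ξ ψ := by
    have h := hclif ξ (c e₁ (c e₂ ψ))
    rw [hvol, hnξ, map_neg] at h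
    simpa using h.symm
  have part1 : c ξ (δ ξ) + c e₁ (δ e₁) + c e₂ (δ e₂) = c ξ ψ := by
    rw [hδξ, hδ1, hδ2, map_zero, map_neg, LinearMap.map_smul_of_tower,
      LinearMap.map_smul_of_tower, my_anticomm c hclif e₂ e₁ h21 ψ, hkey]
    module
  refine ⟨part1, ?_, ?_, ?_, ?_⟩
  · -- T vanishes
    have hfe : c e₁ (δ e₂) + c e₂ (δ e₁) = 0 := by
      rw [hδ1, hδ2, map_neg, LinearMap.map_smul_of_tower, LinearMap.map_smul_of_tower,
        hclif e₁ ψ, hclif e₂ ψ, hn1, hn2]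
      module
    have hfe' : c e₂ (δ e₁) + c e₁ (δ e₂) = 0 := by rw [add_comm]; exact hfe
    have w1 : (inner ℂ (c e₁ (c e₁ ψ)) ψ : ℂ).re = -‖ψ‖^2 := by
      rw [hclif e₁ ψ, hn1, inner_neg_left]
      simp [my_re_self]
      rw [← Complex.ofReal_pow, Complex.ofReal_re]
    have w2 : (inner ℂ (c e₂ (c e₂ ψ)) ψ : ℂ).re = -‖ψ‖^2 := by
      rw [hclif e₂ ψ, hn2, inner_neg_left]
      simp [my_re_self]
      rw [← Complex.ofReal_pow, Complex.ofReal_re]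
    intro i j
    fin_cases i <;> fin_cases j <;>
      simp [hT, hδξ, hδ1, hδ2, inner_add_left, inner_neg_left, hfe, hfe', w1, w2,
        LinearMap.map_smul_of_tower, map_neg, my_re_smul, vξ1, vξ1', v12, v21]
  · -- Q e₁ e₂
    have hq : c e₂ (δ e₁) - c e₁ (δ e₂) = -ψ := by
      rw [hδ1, hδ2, map_neg, LinearMap.map_smul_of_tower, LinearMap.map_smul_of_tower,
        hclif e₁ ψ, hclif e₂ ψ, hn1, hn2]
      module
    rw [hQ, hq, inner_neg_left, Complex.neg_re, my_re_self]
    field_simp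
  · rw [hQ]
    simp [hδξ, hδ1, LinearMap.map_smul_of_tower, inner_neg_left, my_re_smul, vξ1]
  · rw [hQ]
    simp [hδξ, hδ2, map_neg, LinearMap.map_smul_of_tower, inner_neg_left, my_re_smul, vξ1']
end

section
/- Pointwise computations for Example 2 (the solvable group Sol₃): Let c be a Clifford multiplication on S over V = ℝ³, let (e₁, e₂, e₃) be an orthonormal basis of V, let ψ ∈ S be nonzero, and define δ : V → S on the basis by δ(e₁) = (1/2)·c(e₂)(ψ), δ(e₂) = (1/2)·c(e₁)(ψ), δ(e₃) = 0. Then: (i) c(e₁)(δ(e₁)) + c(e₂)(δ(e₂)) + c(e₃)(δ(e₃)) = 0, i.e. ψ is a pointwise harmonic spinor; (ii) T^{ψ,δ}(e₁,e₂) = T^{ψ,δ}(e₂,e₁) = −1/2 and all other entries T^{ψ,δ}(e_i,e_j) vanish; and (iii) Q^{ψ,δ}(e_i,e_j) = 0 for all i, j. In particular Σ_{i,j} T^{ψ,δ}(e_i,e_j)² = 1/2. -/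
/-- Pointwise computations for Example 2 (the solvable group `Sol₃`):
with `δ e₁ = (1/2)·e₂·ψ`, `δ e₂ = (1/2)·e₁·ψ`, `δ e₃ = 0`, the spinor is pointwise
harmonic, `T^{ψ,δ}(e₁,e₂) = T^{ψ,δ}(e₂,e₁) = −1/2` with all other entries zero,
`Q^{ψ,δ} = 0`, and `Σᵢⱼ T(eᵢ,eⱼ)² = 1/2`. -/
theorem example_sol3
    {S : Type*} [NormedAddCommGroup S] [InnerProductSpace ℂ S]
    (c : EuclideanSpace ℝ (Fin 3) →ₗ[ℝ] (S →ₗ[ℂ] S))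
    (hclif : ∀ (v : EuclideanSpace ℝ (Fin 3)) (ψ : S), c v (c v ψ) = -((‖v‖ ^ 2 : ℝ) • ψ))
    (hskew : ∀ (v : EuclideanSpace ℝ (Fin 3)) (φ ψ : S),
      (inner ℂ (c v φ) ψ : ℂ).re = -(inner ℂ φ (c v ψ) : ℂ).re)
    (e₁ e₂ e₃ : EuclideanSpace ℝ (Fin 3)) (hON : Orthonormal ℝ ![e₁, e₂, e₃])
    (ψ : S) (hψ : ψ ≠ 0)
    (δ : EuclideanSpace ℝ (Fin 3) → S)
    (hδ1 : δ e₁ = (1 / 2 : ℝ) • c e₂ ψ)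
    (hδ2 : δ e₂ = (1 / 2 : ℝ) • c e₁ ψ)
    (hδ3 : δ e₃ = 0)
    (T Q : EuclideanSpace ℝ (Fin 3) → EuclideanSpace ℝ (Fin 3) → ℝ)
    (hT : ∀ X Y, T X Y
      = (1 / 2 : ℝ) * (inner ℂ (c X (δ Y) + c Y (δ X)) ψ : ℂ).re / ‖ψ‖ ^ 2)
    (hQ : ∀ X Y, Q X Y
      = (1 / 2 : ℝ) * (inner ℂ (c Y (δ X) - c X (δ Y)) ψ : ℂ).re / ‖ψ‖ ^ 2) :
    c e₁ (δ e₁) + c e₂ (δ e₂) + c e₃ (δ e₃) = 0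
    ∧ T e₁ e₂ = -(1 / 2 : ℝ) ∧ T e₂ e₁ = -(1 / 2 : ℝ)
    ∧ (∀ i j : Fin 3, ¬((i = 0 ∧ j = 1) ∨ (i = 1 ∧ j = 0)) →
        T (![e₁, e₂, e₃] i) (![e₁, e₂, e₃] j) = 0)
    ∧ (∀ i j : Fin 3, Q (![e₁, e₂, e₃] i) (![e₁, e₂, e₃] j) = 0)
    ∧ (∑ i : Fin 3, ∑ j : Fin 3, (T (![e₁, e₂, e₃] i) (![e₁, e₂, e₃] j)) ^ 2)
        = 1 / 2 := by

  have hnψ : (‖ψ‖ : ℝ) ^ 2 ≠ 0 := pow_ne_zero _ (norm_ne_zero_iff.mpr hψ)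
  have hpolar : ∀ u v : EuclideanSpace ℝ (Fin 3),
      c u (c v ψ) + c v (c u ψ) = (-(2 * (inner ℝ u v : ℝ))) • ψ := by
    intro u v
    have h := hclif (u + v) ψ
    rw [map_add] at h
    simp only [LinearMap.add_apply, map_add] at h
    rw [hclif u ψ, hclif v ψ, norm_add_sq_real] at h
    have h2 : c u (c v ψ) + c v (c u ψ)
        = -((‖u‖ ^ 2 + 2 * (inner ℝ u v : ℝ) + ‖v‖ ^ 2) • ψ)
          - (-((‖u‖ ^ 2 : ℝ) • ψ)) - (-((‖v‖ ^ 2 : ℝ) • ψ)) := by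
      rw [← h]; abel
    rw [h2]
    module
  have hresym : ∀ x y : S, (inner ℂ x y : ℂ).re = (inner ℂ y x : ℂ).re := by
    intro x y
    have := inner_re_symm (𝕜 := ℂ) x y
    simpa using this
  have hsymm : ∀ u v : EuclideanSpace ℝ (Fin 3),
      (inner ℂ (c u (c v ψ)) ψ : ℂ).re = (inner ℂ (c v (c u ψ)) ψ : ℂ).re := by
    intro u v
    rw [hskew u (c v ψ) ψ, hskew v ψ (c u ψ), neg_neg, hresym]
  have hsmul_inner : ∀ (r : ℝ) (x y : S), (inner ℂ (r • x) y : ℂ).re = r * (inner ℂ x y : ℂ).re := by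
    intro r x y
    have hrs : (r : ℂ) • x = r • x := by
      rw [← algebraMap_smul ℂ r x]; norm_num
    rw [← hrs, inner_smul_left]
    simp [Complex.conj_ofReal, Complex.mul_re]
  have hself : (inner ℂ ψ ψ : ℂ).re = ‖ψ‖ ^ 2 := by
    have := inner_self_eq_norm_sq (𝕜 := ℂ) ψ
    simpa using this
  have key : ∀ u v : EuclideanSpace ℝ (Fin 3),
      (inner ℂ (c u (c v ψ)) ψ : ℂ).re = -((inner ℝ u v : ℝ) * ‖ψ‖ ^ 2) := by
    intro u v
    have h1 : (inner ℂ (c u (c v ψ) + c v (c u ψ)) ψ : ℂ).re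
        = -(2 * (inner ℝ u v : ℝ)) * ‖ψ‖ ^ 2 := by
      rw [hpolar u v, hsmul_inner, hself]
    rw [inner_add_left, Complex.add_re, ← hsymm u v] at h1
    linarith
  -- inner products for the basis vectors
  have g := orthonormal_iff_ite.mp hON
  have i11 : (inner ℝ e₁ e₁ : ℝ) = 1 := by simpa using g 0 0
  have i22 : (inner ℝ e₂ e₂ : ℝ) = 1 := by simpa using g 1 1
  have i33 : (inner ℝ e₃ e₃ : ℝ) = 1 := by simpa using g 2 2
  have i12 : (inner ℝ e₁ e₂ : ℝ) = 0 := by simpa using g 0 1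
  have i21 : (inner ℝ e₂ e₁ : ℝ) = 0 := by simpa using g 1 0
  have i13 : (inner ℝ e₁ e₃ : ℝ) = 0 := by simpa using g 0 2
  have i31 : (inner ℝ e₃ e₁ : ℝ) = 0 := by simpa using g 2 0
  have i23 : (inner ℝ e₂ e₃ : ℝ) = 0 := by simpa using g 1 2
  have i32 : (inner ℝ e₃ e₂ : ℝ) = 0 := by simpa using g 2 1
  -- Re of c u ((1/2) • c v ψ) against ψ
  have hre : ∀ u v : EuclideanSpace ℝ (Fin 3),
      (inner ℂ (c u ((1 / 2 : ℝ) • c v ψ)) ψ : ℂ).re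
        = -((1 / 2 : ℝ) * ((inner ℝ u v : ℝ) * ‖ψ‖ ^ 2)) := by
    intro u v
    rw [(c u).map_smul_of_tower, hsmul_inner, key]
    ring
  have hz : ∀ u : EuclideanSpace ℝ (Fin 3), (inner ℂ (c u (0 : S)) ψ : ℂ).re = 0 := by
    intro u; rw [map_zero]; simp
  -- First conjunct: harmonic
  have harm : c e₁ (δ e₁) + c e₂ (δ e₂) + c e₃ (δ e₃) = 0 := by
    rw [hδ1, hδ2, hδ3, map_zero, (c e₁).map_smul_of_tower, (c e₂).map_smul_of_tower,
      add_zero, ← smul_add, hpolar e₁ e₂, i12]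
    simp
  -- T values
  have tval : ∀ (u v : EuclideanSpace ℝ (Fin 3)), T u v
      = (1 / 2 : ℝ) * ((inner ℂ (c u (δ v)) ψ : ℂ).re + (inner ℂ (c v (δ u)) ψ : ℂ).re) / ‖ψ‖ ^ 2 := by
    intro u v; rw [hT, inner_add_left, Complex.add_re]
  have qval : ∀ (u v : EuclideanSpace ℝ (Fin 3)), Q u v
      = (1 / 2 : ℝ) * ((inner ℂ (c v (δ u)) ψ : ℂ).re - (inner ℂ (c u (δ v)) ψ : ℂ).re) / ‖ψ‖ ^ 2 := by
    intro u v; rw [hQ, inner_sub_left, Complex.sub_re]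
  have t11 : T e₁ e₁ = 0 := by
    rw [tval, hδ1, hre, i12]; field_simp; ring
  have t22 : T e₂ e₂ = 0 := by
    rw [tval, hδ2, hre, i21]; field_simp; ring
  have t33 : T e₃ e₃ = 0 := by
    rw [tval, hδ3, hz]; simp
  have t12 : T e₁ e₂ = -(1 / 2 : ℝ) := by
    rw [tval, hδ1, hδ2, hre, hre, i11, i22]; field_simp; ring
  have t21 : T e₂ e₁ = -(1 / 2 : ℝ) := by
    rw [tval, hδ1, hδ2, hre, hre, i11, i22]; field_simp; ring
  have t13 : T e₁ e₃ = 0 := by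
    rw [tval, hδ1, hδ3, hz, hre, i32]; field_simp; ring
  have t31 : T e₃ e₁ = 0 := by
    rw [tval, hδ1, hδ3, hz, hre, i32]; field_simp; ring
  have t23 : T e₂ e₃ = 0 := by
    rw [tval, hδ2, hδ3, hz, hre, i31]; field_simp; ring
  have t32 : T e₃ e₂ = 0 := by
    rw [tval, hδ2, hδ3, hz, hre, i31]; field_simp; ring
  have q11 : Q e₁ e₁ = 0 := by rw [qval]; simp
  have q22 : Q e₂ e₂ = 0 := by rw [qval]; simp
  have q33 : Q e₃ e₃ = 0 := by rw [qval]; simp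
  have q12 : Q e₁ e₂ = 0 := by
    rw [qval, hδ1, hδ2, hre, hre, i11, i22]; simp
  have q21 : Q e₂ e₁ = 0 := by
    rw [qval, hδ1, hδ2, hre, hre, i11, i22]; simp
  have q13 : Q e₁ e₃ = 0 := by
    rw [qval, hδ1, hδ3, hz, hre, i32]; simp
  have q31 : Q e₃ e₁ = 0 := by
    rw [qval, hδ1, hδ3, hz, hre, i32]; simp
  have q23 : Q e₂ e₃ = 0 := by
    rw [qval, hδ2, hδ3, hz, hre, i31]; simp
  have q32 : Q e₃ e₂ = 0 := by
    rw [qval, hδ2, hδ3, hz, hre, i31]; simp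
  refine ⟨harm, t12, t21, ?_, ?_, ?_⟩
  · intro i j h
    fin_cases i <;> fin_cases j <;>
      simp only [Matrix.cons_val_zero, Matrix.cons_val_one, Matrix.head_cons,
        Matrix.cons_val_two, Matrix.tail_cons] <;>
      first
        | exact t11 | exact t22 | exact t33 | exact t13 | exact t31
        | exact t23 | exact t32 | exact absurd (by simp) h
  · intro i j
    fin_cases i <;> fin_cases j <;>
      simp only [Matrix.cons_val_zero, Matrix.cons_val_one, Matrix.head_cons,
        Matrix.cons_val_two, Matrix.tail_cons] <;>
      first
        | exact q11 | exact q12 | exact q13 | exact q21 | exact q22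
        | exact q23 | exact q31 | exact q32 | exact q33
  · simp only [Fin.sum_univ_three, Matrix.cons_val_zero, Matrix.cons_val_one,
      Matrix.head_cons, Matrix.cons_val_two, Matrix.tail_cons,
      t11, t12, t13, t21, t22, t23, t31, t32, t33]
    norm_num
end
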